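/- Let p ≥ 1 be an integer and set m := 3^8 · p!. Let N be a group generated by two elements x and y (i.e., Subgroup.closure {x,y} = ⊤) satisfying the five relations Π_{j=1}^{81}(x·y^j) = 1, Π_{j=82}^{162}(x·y^j) = 1, Π_{j=m}^{2m+1}(x·y^j) = 1, Π_{j=3m}^{4m+2}(x·y^j) = 1, and Π_{j=5m}^{6m+3}(x·y^j) = 1. Then: (a) N equals the normal closure of {y^m} in N; (b) N is perfect, i.e., its commutator subgroup is all of N; (c) every subgroup of N of index at most p equals N. (The properties of the kernel subgroup N_W established in the proof of Proposition 2.1 of the paper.) -/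
import Mathlib


/-- The ordered product `(g·h^a)(g·h^{a+1})⋯(g·h^b)`. -/
def seg {G : Type*} [Group G] (g h : G) (a b : ℕ) : G :=
  ((List.range (b + 1 - a)).map (fun i => g * h ^ (a + i))).prod

lemma seg_map {G H : Type*} [Group G] [Group H] (f : G →* H) (g h : G) (a b : ℕ) :
    f (seg g h a b) = seg (f g) (f h) a b := by
  unfold seg
  rw [map_list_prod, List.map_map]
  congr 1
  apply List.map_congr_left
  intro i _
  simp [map_mul, map_pow]

lemma seg_shift {G : Type*} [Group G] (g h : G) {c : ℕ} (hc : h ^ c = 1) (a b : ℕ) :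
    seg g h (a + c) (b + c) = seg g h a b := by
  unfold seg
  rw [show b + c + 1 - (a + c) = b + 1 - a by omega]
  congr 1
  apply List.map_congr_left
  intro i _
  rw [show a + c + i = a + i + c by ring, pow_add, hc, mul_one]

lemma seg_succ {G : Type*} [Group G] (g h : G) (a b : ℕ) (hab : a ≤ b + 1) :
    seg g h a (b + 1) = seg g h a b * (g * h ^ (b + 1)) := by
  unfold seg
  rw [show b + 1 + 1 - a = (b + 1 - a) + 1 by omega, List.range_succ, List.map_append,
    List.prod_append]
  simp only [List.map_cons, List.map_nil, List.prod_cons, List.prod_nil, mul_one]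
  rw [show a + (b + 1 - a) = b + 1 by omega]

lemma seg_comm {G : Type*} [CommGroup G] (g h : G) (a b : ℕ) :
    seg g h a b = g ^ (b + 1 - a) * h ^ (∑ i ∈ Finset.range (b + 1 - a), (a + i)) := by
  unfold seg
  generalize b + 1 - a = n
  induction n with
  | zero => simp
  | succ n ih =>
    rw [List.range_succ, List.map_append, List.prod_append, ih, Finset.sum_range_succ,
      pow_succ, pow_add]
    simp only [List.map_cons, List.map_nil, List.prod_cons, List.prod_nil, mul_one]
    rw [mul_mul_mul_comm]

/-- The properties of the kernel subgroup `N_W` from the proof of Proposition 2.1: a group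
generated by `x, y` subject to the five listed relations (with `m = 3^8 · p!`) is normally
generated by `y^m`, is perfect, and has no proper subgroup of index at most `p`. -/
theorem stmt11 (p : ℕ) (hp : 1 ≤ p) (m : ℕ) (hm : m = 3 ^ 8 * Nat.factorial p)
    (N : Type) [Group N] (x y : N)
    (hgen : Subgroup.closure ({x, y} : Set N) = ⊤)
    (r1 : seg x y 1 81 = 1)
    (r2 : seg x y 82 162 = 1)
    (r3 : seg x y m (2 * m + 1) = 1)
    (r4 : seg x y (3 * m) (4 * m + 2) = 1)
    (r5 : seg x y (5 * m) (6 * m + 3) = 1) :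
    Subgroup.normalClosure ({y ^ m} : Set N) = ⊤ ∧
    commutator N = ⊤ ∧
    (∀ K : Subgroup N, K.index ≠ 0 → K.index ≤ p → K = ⊤) := by
  -- Part (a)
  have ha : Subgroup.normalClosure ({y ^ m} : Set N) = ⊤ := by
    set M := Subgroup.normalClosure ({y ^ m} : Set N) with hM
    have π := QuotientGroup.mk' M
    set X : N ⧸ M := QuotientGroup.mk x with hX
    set Y : N ⧸ M := QuotientGroup.mk y with hYdef
    have hY : Y ^ m = 1 := by
      rw [hYdef, ← QuotientGroup.mk_pow, QuotientGroup.eq_one_iff]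
      exact Subgroup.subset_normalClosure (Set.mem_singleton _)
    have himg : ∀ a b : ℕ, seg x y a b = 1 → seg X Y a b = (1 : N ⧸ M) := by
      intro a b hr
      have := seg_map (QuotientGroup.mk' M) x y a b
      rw [hr, map_one] at this
      exact this.symm
    have h3 : seg X Y 0 (m + 1) = 1 := by
      rw [← seg_shift X Y hY 0 (m + 1)]
      have := himg m (2 * m + 1) r3
      rw [show (0 : ℕ) + m = m by ring, show m + 1 + m = 2 * m + 1 by ring]
      exact this
    have hY3 : Y ^ (3 * m) = 1 := by
      rw [show 3 * m = m * 3 by ring, pow_mul, hY, one_pow]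
    have hY5 : Y ^ (5 * m) = 1 := by
      rw [show 5 * m = m * 5 by ring, pow_mul, hY, one_pow]
    have h4 : seg X Y 0 (m + 2) = 1 := by
      rw [← seg_shift X Y hY3 0 (m + 2)]
      have := himg (3 * m) (4 * m + 2) r4
      rw [show (0 : ℕ) + 3 * m = 3 * m by ring, show m + 2 + 3 * m = 4 * m + 2 by ring]
      exact this
    have h5 : seg X Y 0 (m + 3) = 1 := by
      rw [← seg_shift X Y hY5 0 (m + 3)]
      have := himg (5 * m) (6 * m + 3) r5
      rw [show (0 : ℕ) + 5 * m = 5 * m by ring, show m + 3 + 5 * m = 6 * m + 3 by ring]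
      exact this
    have e4 : seg X Y 0 (m + 2) = seg X Y 0 (m + 1) * (X * Y ^ (m + 2)) := by
      have := seg_succ X Y 0 (m + 1) (by omega)
      rwa [show m + 1 + 1 = m + 2 by ring] at this
    have e5 : seg X Y 0 (m + 3) = seg X Y 0 (m + 2) * (X * Y ^ (m + 3)) := by
      have := seg_succ X Y 0 (m + 2) (by omega)
      rwa [show m + 2 + 1 = m + 3 by ring] at this
    have k4 : X * Y ^ (m + 2) = 1 := by
      rw [e4, h3, one_mul] at h4; exact h4
    have k5 : X * Y ^ (m + 3) = 1 := by
      rw [e5, h4, one_mul] at h5; exact h5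
    have hYone : Y = 1 := by
      have : X * Y ^ (m + 2) * Y = 1 := by
        rw [mul_assoc, ← pow_succ, show m + 2 + 1 = m + 3 by ring]; exact k5
      rw [k4, one_mul] at this; exact this
    have hXone : X = 1 := by
      have := k4
      rw [hYone, one_pow, mul_one] at this; exact this
    have key : ∀ n : N, (QuotientGroup.mk n : N ⧸ M) = 1 := by
      intro n
      have hn : n ∈ Subgroup.closure ({x, y} : Set N) := by rw [hgen]; trivial
      induction hn using Subgroup.closure_induction with
      | mem g hg =>
        rcases hg with hg | hg
        · rw [hg]; exact hXone
        · rw [Set.mem_singleton_iff] at hg; rw [hg]; exact hYone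
      | one => rfl
      | mul g h _ _ ihg ihh =>
        rw [show (QuotientGroup.mk (g * h) : N ⧸ M)
          = QuotientGroup.mk g * QuotientGroup.mk h from rfl, ihg, ihh, one_mul]
      | inv g _ ihg =>
        rw [show (QuotientGroup.mk g⁻¹ : N ⧸ M)
          = (QuotientGroup.mk g : N ⧸ M)⁻¹ from rfl, ihg, inv_one]
    ext n
    simp only [Subgroup.mem_top, iff_true]
    exact (QuotientGroup.eq_one_iff n).1 (key n)
  -- Part (b)
  have hb : commutator N = ⊤ := by
    set φ := Abelianization.of (G := N) with hφ
    set G : Abelianization N := φ x with hG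
    set H : Abelianization N := φ y with hH
    have himg : ∀ a b : ℕ, seg x y a b = 1 →
        G ^ (b + 1 - a) * H ^ (∑ i ∈ Finset.range (b + 1 - a), (a + i)) = 1 := by
      intro a b hr
      have := seg_map φ x y a b
      rw [hr, map_one, seg_comm] at this
      exact this.symm
    have h1 := himg 1 81 r1
    have h2 := himg 82 162 r2
    have h3 := himg m (2 * m + 1) r3
    have h4 := himg (3 * m) (4 * m + 2) r4
    have h5 := himg (5 * m) (6 * m + 3) r5
    norm_num at h1 h2
    rw [show 2 * m + 1 + 1 - m = m + 2 by omega] at h3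
    rw [show 4 * m + 2 + 1 - 3 * m = m + 3 by omega] at h4
    rw [show 6 * m + 3 + 1 - 5 * m = m + 4 by omega] at h5
    -- sum identities
    have hs4 : (∑ i ∈ Finset.range (m + 3), (3 * m + i))
        = (∑ i ∈ Finset.range (m + 2), (m + i)) + (2 * m ^ 2 + 8 * m + 2) := by
      rw [Finset.sum_range_succ]
      rw [show (∑ i ∈ Finset.range (m + 2), (3 * m + i))
          = ∑ i ∈ Finset.range (m + 2), ((m + i) + 2 * m) by
        apply Finset.sum_congr rfl; intros; omega]
      rw [Finset.sum_add_distrib, Finset.sum_const, Finset.card_range, smul_eq_mul]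
      ring
    have hs5 : (∑ i ∈ Finset.range (m + 4), (5 * m + i))
        = (∑ i ∈ Finset.range (m + 3), (3 * m + i)) + (2 * m ^ 2 + 12 * m + 3) := by
      rw [Finset.sum_range_succ]
      rw [show (∑ i ∈ Finset.range (m + 3), (5 * m + i))
          = ∑ i ∈ Finset.range (m + 3), ((3 * m + i) + 2 * m) by
        apply Finset.sum_congr rfl; intros; omega]
      rw [Finset.sum_add_distrib, Finset.sum_const, Finset.card_range, smul_eq_mul]
      ring
    rw [show (9882 : ℕ) = 3321 + 6561 from rfl] at h2
    have h4' := h4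
    rw [hs4] at h4
    rw [hs5] at h5
    -- derive H ^ 6561 = 1
    have hH1 : H ^ 6561 = 1 := by
      have key : (G ^ 81 * H ^ 3321) * H ^ 6561 = 1 := by
        rw [mul_assoc, ← pow_add]
        exact h2
      rw [h1, one_mul] at key
      exact key
    -- derive G * H ^ (2m²+8m+2) = 1
    have hGH : G * H ^ (2 * m ^ 2 + 8 * m + 2) = 1 := by
      have key : (G ^ (m + 2) * H ^ (∑ i ∈ Finset.range (m + 2), (m + i))) *
          (G * H ^ (2 * m ^ 2 + 8 * m + 2)) = 1 := by
        rw [mul_mul_mul_comm, ← pow_succ, ← pow_add, show m + 2 + 1 = m + 3 by ring]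
        exact h4
      rw [h3, one_mul] at key
      exact key
    have hGH2 : G * H ^ (2 * m ^ 2 + 12 * m + 3) = 1 := by
      have key : (G ^ (m + 3) * H ^ (∑ i ∈ Finset.range (m + 3), (3 * m + i))) *
          (G * H ^ (2 * m ^ 2 + 12 * m + 3)) = 1 := by
        rw [mul_mul_mul_comm, ← pow_succ, ← pow_add, show m + 3 + 1 = m + 4 by ring]
        exact h5
      rw [h4', one_mul] at key
      exact key
    have hH2 : H ^ (4 * m + 1) = 1 := by
      have key : (G * H ^ (2 * m ^ 2 + 8 * m + 2)) * H ^ (4 * m + 1) = 1 := by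
        rw [mul_assoc, ← pow_add,
          show 2 * m ^ 2 + 8 * m + 2 + (4 * m + 1) = 2 * m ^ 2 + 12 * m + 3 by ring]
        exact hGH2
      rw [hGH, one_mul] at key
      exact key
    -- coprimality forces H = 1
    have h3m : (3 : ℕ) ∣ m := by
      rw [hm]; exact ⟨3 ^ 7 * Nat.factorial p, by ring⟩
    have hcop : Nat.Coprime 6561 (4 * m + 1) := by
      have hnd : ¬ (3 : ℕ) ∣ (4 * m + 1) := by omega
      have h1c : Nat.Coprime 3 (4 * m + 1) :=
        (Nat.Prime.coprime_iff_not_dvd Nat.prime_three).2 hnd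
      have := Nat.Coprime.pow_left 8 h1c
      norm_num at this
      exact this
    have hHone : H = 1 := by
      have d1 := orderOf_dvd_of_pow_eq_one hH1
      have d2 := orderOf_dvd_of_pow_eq_one hH2
      have : orderOf H ∣ 1 := hcop ▸ Nat.dvd_gcd d1 d2
      rw [Nat.dvd_one] at this
      exact orderOf_eq_one_iff.1 this
    have hGone : G = 1 := by
      have := hGH
      rw [hHone, one_pow, mul_one] at this
      exact this
    have key : ∀ n : N, φ n = 1 := by
      intro n
      have hn : n ∈ Subgroup.closure ({x, y} : Set N) := by rw [hgen]; trivial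
      induction hn using Subgroup.closure_induction with
      | mem g hg =>
        rcases hg with hg | hg
        · rw [hg]; exact hGone
        · rw [Set.mem_singleton_iff] at hg; rw [hg]; exact hHone
      | one => exact map_one φ
      | mul g h _ _ ihg ihh => rw [map_mul, ihg, ihh, one_mul]
      | inv g _ ihg => rw [map_inv, ihg, inv_one]
    ext n
    simp only [Subgroup.mem_top, iff_true]
    exact (QuotientGroup.eq_one_iff n).1 (key n)
  refine ⟨ha, hb, ?_⟩
  -- Part (c)
  intro K hK0 hKp
  classical
  have hfin : Finite (N ⧸ K) := Nat.finite_of_card_ne_zero hK0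
  haveI : Fintype (N ⧸ K) := Fintype.ofFinite (N ⧸ K)
  set φ := MulAction.toPermHom N (N ⧸ K) with hφ
  have hcard : Fintype.card (N ⧸ K) ≤ p := by
    rw [← Nat.card_eq_fintype_card]
    exact hKp
  have hdvd : (Fintype.card (N ⧸ K)).factorial ∣ m := by
    rw [hm]
    exact Dvd.dvd.mul_left (Nat.factorial_dvd_factorial hcard) _
  have hym : y ^ m ∈ φ.ker := by
    rw [MonoidHom.mem_ker, map_pow]
    obtain ⟨k, hk⟩ := hdvd
    rw [hk, pow_mul]
    have : (φ y) ^ (Fintype.card (N ⧸ K)).factorial = 1 := by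
      have := pow_card_eq_one (G := Equiv.Perm (N ⧸ K)) (x := φ y)
      rwa [Fintype.card_perm] at this
    rw [this, one_pow]
  have hker : φ.ker = ⊤ := by
    rw [eq_top_iff, ← ha]
    exact Subgroup.normalClosure_le_normal (by simpa using hym)
  ext g
  simp only [Subgroup.mem_top, iff_true]
  have hg : φ g = 1 := by
    have : g ∈ φ.ker := by rw [hker]; trivial
    rwa [MonoidHom.mem_ker] at this
  have : φ g (QuotientGroup.mk 1) = QuotientGroup.mk 1 := by rw [hg]; rfl
  have h2 : (QuotientGroup.mk (g * 1) : N ⧸ K) = QuotientGroup.mk 1 := this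
  rw [mul_one] at h2
  have := QuotientGroup.eq.1 h2.symm
  simpa using this
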